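/- arXiv:1606.08567 — 2 statements merged into one kernel-verified Lean document; each statement's English description precedes it below -/
import Mathlib

section
/- Conditional independence of the binned present from the far past given a past ending in an empty window (key identity in the proof of Proposition 1). Assume τ ≥ D. Let ℓ ≥ 1 and x : {−ℓ,…,−1} → A with x(−ℓ) = z, and set C = {X₋ℓ = x(−ℓ),…,X₋₁ = x(−1)} ⊆ Ω. Then for every a ∈ A and every finite cylinder event A₀ depending only on the coordinates Xₙ with n ≤ −ℓ−1, one has P⁽ᵇ⁾({X₀ = a} ∩ A₀ ∩ C) · P⁽ᵇ⁾(C) = P⁽ᵇ⁾({X₀ = a} ∩ C) · P⁽ᵇ⁾(A₀ ∩ C). -/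
/-!
If the binned pattern at `-ℓ` is empty, the original process vanishes on the whole window
`{-ℓτ, …, -ℓτ + τ - 1}` of length `τ ≥ D`. By the Markov property of order `D`, transported to
any time by stationarity, a fixed block of length at least `D` makes the cylinders before it and
after it conditionally independent given the block; summing over the fibres of the restriction
maps, the same holds for all events depending on finitely many sites on either side. Binned
events on bins `≤ -ℓ - 1` only see sites before the window and binned events on bins `≥ -ℓ + 1`
only sites after it, so the binned far past is conditionally independent, given the empty window,
both of `{X₀ = a} ∩ C'` and of `C'`, where `C'` fixes the bins `-ℓ + 1, …, -1`. Dividing the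
first product formula by the second gives the claim.
-/

open MeasureTheory Filter

/-- Alphabet of spike patterns of `N` neurons. -/
abbrev Pat (N : ℕ) : Type := Fin N → Bool

/-- Space of spike trains (configurations). -/
abbrev Conf (N : ℕ) : Type := ℤ → Pat N

/-- Conditional probability of cylinder sets, defined as the ratio of the
corresponding (cylinder) probabilities. -/
noncomputable def condProb {N : ℕ} (P : Measure (Conf N)) (E C : Set (Conf N)) : ℝ :=
  (P (E ∩ C)).toReal / (P C).toReal

/-- Cylinder set prescribing the configuration on the finite set `s`. -/
def cyl {N : ℕ} (s : Finset ℤ) (v : ℤ → Pat N) : Set (Conf N) :=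
  {ω | ∀ n ∈ s, ω n = v n}

/-- The left shift. -/
def shiftMap {N : ℕ} : Conf N → Conf N := fun ω n => ω (n + 1)

/-- The binning map with window size `τ`: `(binMap τ ω) m k = true` iff neuron `k`
spikes at least once in the window `{mτ, …, (m+1)τ - 1}`. -/
def binMap {N : ℕ} (τ : ℕ) (ω : Conf N) : Conf N :=
  fun m k => (List.range τ).any fun i => ω (m * (τ : ℤ) + (i : ℤ)) k

/-- The all-false pattern (no neuron spikes). -/
def zPat (N : ℕ) : Pat N := fun _ => false

/-- `P` is (stationary) Markov of order `D`: conditioning the present on any finite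
past of length `m ≥ D` equals conditioning on the last `D` coordinates. -/
def MarkovOrder {N : ℕ} (P : Measure (Conf N)) (D : ℕ) : Prop :=
  ∀ (a : Pat N) (m : ℕ), D ≤ m → ∀ w : ℤ → Pat N,
    condProb P {ω | ω 0 = a} (cyl (Finset.Icc (-(m : ℤ)) (-1)) w)
      = condProb P {ω | ω 0 = a} (cyl (Finset.Icc (-(D : ℤ)) (-1)) w)

/-- Every finite cylinder has strictly positive probability. -/
def PosCyl {N : ℕ} (P : Measure (Conf N)) : Prop :=
  ∀ (s : Finset ℤ) (v : ℤ → Pat N), 0 < P (cyl s v)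


variable {N : ℕ}

section Cylinders

lemma restrict_preimage_singleton_eq_cyl (S : Finset ℤ) (v : ℤ → Pat N) :
    S.restrict ⁻¹' ({S.restrict v} : Set (S → Pat N)) = cyl S v := by
  ext ω
  simp [cyl, funext_iff]

lemma measurableSet_cyl (S : Finset ℤ) (v : ℤ → Pat N) : MeasurableSet (cyl S v) := by
  rw [← restrict_preimage_singleton_eq_cyl]
  exact Finset.measurable_restrict S (measurableSet_singleton _)

lemma cyl_congr {S : Finset ℤ} {v v' : ℤ → Pat N} (h : ∀ n ∈ S, v n = v' n) :
    cyl S v = cyl S v' := by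
  ext ω
  exact forall₂_congr fun n hn => by rw [h n hn]

lemma cyl_union (S T : Finset ℤ) (v : ℤ → Pat N) : cyl (S ∪ T) v = cyl S v ∩ cyl T v := by
  ext ω
  simp [cyl, or_imp, forall_and]

lemma cyl_insert (a : ℤ) (S : Finset ℤ) (v : ℤ → Pat N) :
    cyl (insert a S) v = {ω | ω a = v a} ∩ cyl S v := by
  ext ω
  simp [cyl]

lemma dependsOn_mem_cyl (S : Finset ℤ) (v : ℤ → Pat N) : DependsOn (· ∈ cyl S v) S :=
  fun ω ω' h => propext <| forall₂_congr fun n hn => by rw [h n hn]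

lemma measurableSet_setOf_apply_eq (n : ℤ) (a : Pat N) :
    MeasurableSet {ω : Conf N | ω n = a} :=
  measurable_pi_apply (X := fun _ : ℤ => Pat N) n (measurableSet_singleton a)

lemma dependsOn_mem_setOf_apply_eq (n : ℤ) (a : Pat N) :
    DependsOn (· ∈ {ω : Conf N | ω n = a}) {n} :=
  fun _ _ h => by simp only [Set.mem_ofPred_eq, h n rfl]

lemma dependsOn_mem_inter {ι : Type*} {α : ι → Type*} {E F : Set (∀ i, α i)} {S T : Set ι}
    (hE : DependsOn (· ∈ E) S) (hF : DependsOn (· ∈ F) T) : DependsOn (· ∈ E ∩ F) (S ∪ T) :=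
  fun _ _ h => congrArg₂ And (hE fun i hi => h i (Or.inl hi)) (hF fun i hi => h i (Or.inr hi))

lemma cylinder_restrict_image_of_dependsOn {ι : Type*} {α : ι → Type*} {S : Finset ι}
    {E : Set (∀ i, α i)} (hE : DependsOn (· ∈ E) S) : cylinder S (S.restrict '' E) = E := by
  ext ω
  refine ⟨fun ⟨ω', hω', h⟩ => ?_, fun h => ⟨ω, h, rfl⟩⟩
  exact (hE fun i hi => congrFun h ⟨i, hi⟩).mp hω'

end Cylinders

section Shift

lemma measurable_shiftMap : Measurable (shiftMap (N := N)) :=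
  measurable_pi_lambda _ fun n => measurable_pi_apply (n + 1)

lemma shiftMap_iterate_apply (k : ℕ) (ω : Conf N) (n : ℤ) : shiftMap^[k] ω n = ω (n + k) := by
  induction k generalizing ω with
  | zero => simp
  | succ k ih =>
    rw [Function.iterate_succ_apply, ih, shiftMap]
    push_cast
    ring_nf

lemma preimage_shiftMap_iterate_cyl (k : ℕ) (S : Finset ℤ) (v : ℤ → Pat N) :
    shiftMap^[k] ⁻¹' cyl S v = cyl (S.map (addRightEmbedding (k : ℤ))) fun n => v (n - k) := by
  ext ω
  simp [cyl, shiftMap_iterate_apply]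

lemma measure_cyl_Icc_translate {P : Measure (Conf N)} (hshift : Measure.map shiftMap P = P)
    (t a b : ℤ) (w : ℤ → Pat N) :
    P (cyl (Finset.Icc a b) w) = P (cyl (Finset.Icc (a + t) (b + t)) fun n => w (n - t)) := by
  have hP : MeasurePreserving shiftMap P P := ⟨measurable_shiftMap, hshift⟩
  have key : ∀ (k : ℕ) (a b : ℤ) (w : ℤ → Pat N),
      P (cyl (Finset.Icc a b) w) = P (cyl (Finset.Icc (a + k) (b + k)) fun n => w (n - k)) := by
    intro k a b w
    rw [← Finset.map_add_right_Icc, ← preimage_shiftMap_iterate_cyl,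
      (hP.iterate k).measure_preimage (measurableSet_cyl _ _).nullMeasurableSet]
  obtain ⟨k, rfl | rfl⟩ := Int.eq_nat_or_neg t
  · exact key k a b w
  · simpa using (key k (a + -k) (b + -k) fun n => w (n + k)).symm

end Shift

section Binning

noncomputable def binWindow (τ : ℕ) (m : ℤ) : Finset ℤ := Finset.Icc (m * τ) (m * τ + τ - 1)

variable (τ : ℕ)

lemma measurable_binMap : Measurable (binMap (N := N) τ) := by
  refine measurable_pi_lambda _ fun m => measurable_pi_lambda _ fun k => measurable_to_bool ?_
  have : (fun ω : Conf N => binMap τ ω m k) ⁻¹' {true}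
      = ⋃ i ∈ Finset.range τ, {ω | ω (m * τ + i) k = true} := by
    ext ω
    simp [binMap]
  rw [this]
  exact Finset.measurableSet_biUnion _ fun i _ =>
    (by fun_prop : Measurable fun ω : Conf N => ω (m * τ + i) k) (measurableSet_singleton true)

lemma dependsOn_binMap_apply (m : ℤ) :
    DependsOn (fun ω : Conf N => binMap τ ω m) (binWindow τ m) := fun ω ω' h => by
  funext k
  simp only [binMap]
  rw [Bool.eq_iff_iff]
  simp only [List.any_eq_true, List.mem_range]
  refine exists_congr fun i => and_congr_right fun hi => ?_
  rw [h _ (by simp only [binWindow, Finset.coe_Icc, Set.mem_Icc]; omega)]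

lemma dependsOn_mem_preimage_binMap {E : Set (Conf N)} {S : Set ℤ} (hE : DependsOn (· ∈ E) S) :
    DependsOn (· ∈ binMap τ ⁻¹' E) (⋃ m ∈ S, (binWindow τ m : Set ℤ)) := fun _ _ h =>
  hE fun m hm => dependsOn_binMap_apply τ m fun n hn => h n (Set.mem_biUnion hm hn)

lemma preimage_binMap_setOf_eq_zPat (m : ℤ) :
    binMap τ ⁻¹' {ω | ω m = zPat N} = cyl (binWindow τ m) fun _ => zPat N := by
  ext ω
  change binMap τ ω m = zPat N ↔ ∀ n ∈ binWindow τ m, ω n = zPat N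
  simp only [binWindow, Finset.mem_Icc, funext_iff, zPat, binMap, List.any_eq_false,
    List.mem_range, Bool.not_eq_true]
  constructor
  · intro h n hn k
    have := h k (n - m * τ).toNat (by omega)
    rwa [Int.toNat_of_nonneg (by omega), add_sub_cancel] at this
  · intro h k i hi
    exact h _ (by omega) k

lemma biUnion_binWindow_subset_Iio {S : Set ℤ} {m : ℤ} (hS : S ⊆ Set.Iio m) :
    ⋃ n ∈ S, (binWindow τ n : Set ℤ) ⊆ Set.Iio (m * τ) := by
  simp only [Set.iUnion_subset_iff, binWindow, Finset.coe_Icc]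
  intro n hn j hj
  have : (n + 1) * (τ : ℤ) ≤ m * τ := mul_le_mul_of_nonneg_right (hS hn) (by positivity)
  simp only [Set.mem_Icc, Set.mem_Iio] at hj ⊢
  linarith

lemma biUnion_binWindow_subset_Ioi {S : Set ℤ} {m : ℤ} (hS : S ⊆ Set.Ioi m) :
    ⋃ n ∈ S, (binWindow τ n : Set ℤ) ⊆ Set.Ioi (m * τ + τ - 1) := by
  simp only [Set.iUnion_subset_iff, binWindow, Finset.coe_Icc]
  intro n hn j hj
  have : (m + 1) * (τ : ℤ) ≤ n * τ := mul_le_mul_of_nonneg_right (hS hn) (by positivity)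
  simp only [Set.mem_Icc, Set.mem_Ioi] at hj ⊢
  linarith

end Binning

section ProductFormulas

variable {Ω α β : Type*} [MeasurableSpace Ω] [MeasurableSpace α] [MeasurableSpace β]
  [MeasurableSingletonClass α] [MeasurableSingletonClass β] [Finite α] [Finite β]
  {μ : Measure Ω} {f : Ω → α} {g : Ω → β}

lemma measure_preimage_inter_eq_sum (hf : Measurable f) (A : Set α) (X : Set Ω) :
    μ (f ⁻¹' A ∩ X) = ∑ a ∈ A.toFinite.toFinset, μ (f ⁻¹' {a} ∩ X) := by
  have := sum_measure_preimage_singleton (μ := μ.restrict X) A.toFinite.toFinset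
    fun a _ => hf (measurableSet_singleton a)
  simp only [Set.Finite.coe_toFinset] at this
  rw [← Measure.restrict_apply (hf A.toFinite.measurableSet), ← this]
  exact Finset.sum_congr rfl fun a _ => Measure.restrict_apply (hf (measurableSet_singleton a))

lemma measure_preimage_inter_mul_eq (hf : Measurable f) (hg : Measurable g)
    (h : ∀ a b, μ (f ⁻¹' {a} ∩ g ⁻¹' {b}) * μ Set.univ = μ (f ⁻¹' {a}) * μ (g ⁻¹' {b}))
    (A : Set α) (B : Set β) :
    μ (f ⁻¹' A ∩ g ⁻¹' B) * μ Set.univ = μ (f ⁻¹' A) * μ (g ⁻¹' B) := by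
  have hB (X : Set Ω) : μ (X ∩ g ⁻¹' B) = ∑ b ∈ B.toFinite.toFinset, μ (X ∩ g ⁻¹' {b}) := by
    simp only [Set.inter_comm X]
    exact measure_preimage_inter_eq_sum hg B X
  have hA := measure_preimage_inter_eq_sum (μ := μ) hf A Set.univ
  have hB' := hB Set.univ
  simp only [Set.inter_univ, Set.univ_inter] at hA hB'
  rw [measure_preimage_inter_eq_sum hf A, hA, hB', Finset.sum_mul_sum, Finset.sum_mul]
  refine Finset.sum_congr rfl fun a _ => ?_
  rw [hB, Finset.sum_mul]
  exact Finset.sum_congr rfl fun b _ => h a b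

lemma measure_inter_mul_eq_given_inter [IsFiniteMeasure μ] {F G M Z : Set Ω} (hZ : μ Z ≠ 0)
    (hFM : μ (G ∩ (F ∩ M) ∩ Z) * μ Z = μ (G ∩ Z) * μ (F ∩ M ∩ Z))
    (hM : μ (G ∩ M ∩ Z) * μ Z = μ (G ∩ Z) * μ (M ∩ Z)) :
    μ (F ∩ G ∩ (M ∩ Z)) * μ (M ∩ Z) = μ (F ∩ (M ∩ Z)) * μ (G ∩ (M ∩ Z)) := by
  have hFG : F ∩ G ∩ (M ∩ Z) = G ∩ (F ∩ M) ∩ Z := by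
    ext; simp only [Set.mem_inter_iff]; tauto
  rw [hFG, ← Set.inter_assoc F M Z, ← Set.inter_assoc G M Z]
  refine (ENNReal.mul_left_inj hZ (measure_ne_top μ Z)).mp ?_
  calc _ = μ (G ∩ Z) * μ (F ∩ M ∩ Z) * μ (M ∩ Z) := by rw [mul_right_comm, hFM]
    _ = μ (F ∩ M ∩ Z) * (μ (G ∩ M ∩ Z) * μ Z) := by rw [hM]; ring
    _ = _ := by ring

end ProductFormulas

namespace MarkovOrder

variable {P : Measure (Conf N)} [IsFiniteMeasure P] {D : ℕ}

lemma measure_cyl_Icc_zero_mul_eq (hpos : PosCyl P) (hM : MarkovOrder P D) {m : ℕ}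
    (hm : D ≤ m) (w : ℤ → Pat N) :
    P (cyl (Finset.Icc (-m) 0) w) * P (cyl (Finset.Icc (-D) (-1)) w)
      = P (cyl (Finset.Icc (-D) 0) w) * P (cyl (Finset.Icc (-m) (-1)) w) := by
  have hpresent (k : ℕ) :
      {ω : Conf N | ω 0 = w 0} ∩ cyl (Finset.Icc (-k) (-1)) w = cyl (Finset.Icc (-k) 0) w := by
    rw [← cyl_insert]
    congr 1
    ext n
    simp only [Finset.mem_insert, Finset.mem_Icc]
    omega
  have key := hM (w 0) m hm w
  simp only [condProb, hpresent] at key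
  rw [div_eq_div_iff (ENNReal.toReal_ne_zero.mpr ⟨(hpos _ _).ne', measure_ne_top _ _⟩)
    (ENNReal.toReal_ne_zero.mpr ⟨(hpos _ _).ne', measure_ne_top _ _⟩),
    ← ENNReal.toReal_mul, ← ENNReal.toReal_mul] at key
  exact (ENNReal.toReal_eq_toReal_iff' (by finiteness) (by finiteness)).mp key

lemma measure_cyl_Icc_mul_eq (hshift : Measure.map shiftMap P = P) (hpos : PosCyl P)
    (hM : MarkovOrder P D) {p t : ℤ} (hp : p ≤ t - D) (w : ℤ → Pat N) :
    P (cyl (Finset.Icc p t) w) * P (cyl (Finset.Icc (t - D) (t - 1)) w)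
      = P (cyl (Finset.Icc (t - D) t) w) * P (cyl (Finset.Icc p (t - 1)) w) := by
  obtain ⟨m, hm⟩ : ∃ m : ℕ, (m : ℤ) = t - p := ⟨(t - p).toNat, by omega⟩
  have key := hM.measure_cyl_Icc_zero_mul_eq hpos (m := m) (by omega) fun n => w (n + t)
  rw [measure_cyl_Icc_translate hshift t (-m), measure_cyl_Icc_translate hshift t (-D) (-1),
    measure_cyl_Icc_translate hshift t (-D) 0, measure_cyl_Icc_translate hshift t (-m) (-1)]
    at key
  simp only [sub_add_cancel] at key
  convert key using 5 <;> omega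

lemma measure_cyl_Icc_mul_eq_of_block (hshift : Measure.map shiftMap P = P) (hpos : PosCyl P)
    (hM : MarkovOrder P D) {p c e q : ℤ} (hpc : p ≤ c) (hce : c + D ≤ e + 1) (heq : e ≤ q)
    (w : ℤ → Pat N) :
    P (cyl (Finset.Icc p q) w) * P (cyl (Finset.Icc c e) w)
      = P (cyl (Finset.Icc p e) w) * P (cyl (Finset.Icc c q) w) := by
  -- At time `q + 1`, conditioning on `Icc p q` or on `Icc c q` reduces to conditioning on the
  -- last `D` sites, which both contain because `c + D ≤ q + 1`.
  induction q, heq using Int.leInduction with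
  | base => rfl
  | succ q hq ih =>
    have hp := hM.measure_cyl_Icc_mul_eq hshift hpos (p := p) (t := q + 1) (by omega) w
    have hc := hM.measure_cyl_Icc_mul_eq hshift hpos (p := c) (t := q + 1) (by omega) w
    simp only [add_sub_cancel_right] at hp hc
    set B := P (cyl (Finset.Icc (q + 1 - D) q) w)
    refine (ENNReal.mul_left_inj (hpos _ _).ne' (measure_ne_top P _) (c := B)).mp ?_
    calc _ = P (cyl (Finset.Icc p (q + 1)) w) * B * P (cyl (Finset.Icc c e) w) := by ring
      _ = P (cyl (Finset.Icc (q + 1 - D) (q + 1)) w)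
            * (P (cyl (Finset.Icc p e) w) * P (cyl (Finset.Icc c q) w)) := by rw [hp, ← ih]; ring
      _ = P (cyl (Finset.Icc p e) w)
            * (P (cyl (Finset.Icc (q + 1 - D) (q + 1)) w) * P (cyl (Finset.Icc c q) w)) := by ring
      _ = _ := by rw [← hc]; ring

lemma measure_cyl_inter_mul_eq (hshift : Measure.map shiftMap P = P) (hpos : PosCyl P)
    (hM : MarkovOrder P D) {p c e q : ℤ} (hpc : p ≤ c) (hce : c + D ≤ e + 1) (heq : e ≤ q)
    (u v w : ℤ → Pat N) :
    P (cyl (Finset.Icc p (c - 1)) u ∩ cyl (Finset.Icc (e + 1) q) v ∩ cyl (Finset.Icc c e) w)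
        * P (cyl (Finset.Icc c e) w)
      = P (cyl (Finset.Icc p (c - 1)) u ∩ cyl (Finset.Icc c e) w)
        * P (cyl (Finset.Icc (e + 1) q) v ∩ cyl (Finset.Icc c e) w) := by
  set ω := (Finset.Icc p (c - 1)).piecewise u ((Finset.Icc (e + 1) q).piecewise v w) with hω
  have hu : cyl (Finset.Icc p (c - 1)) u = cyl (Finset.Icc p (c - 1)) ω :=
    cyl_congr fun n hn => (Finset.piecewise_eq_of_mem _ _ _ hn).symm
  have hv : cyl (Finset.Icc (e + 1) q) v = cyl (Finset.Icc (e + 1) q) ω := by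
    refine cyl_congr fun n hn => ?_
    rw [Finset.mem_Icc] at hn
    rw [hω, Finset.piecewise_eq_of_notMem _ _ _ (by simp only [Finset.mem_Icc]; omega),
      Finset.piecewise_eq_of_mem _ _ _ (by simp only [Finset.mem_Icc]; omega)]
  have hw : cyl (Finset.Icc c e) w = cyl (Finset.Icc c e) ω := by
    refine cyl_congr fun n hn => ?_
    rw [Finset.mem_Icc] at hn
    rw [hω, Finset.piecewise_eq_of_notMem _ _ _ (by simp only [Finset.mem_Icc]; omega),
      Finset.piecewise_eq_of_notMem _ _ _ (by simp only [Finset.mem_Icc]; omega)]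
  have hpq : Finset.Icc p (c - 1) ∪ Finset.Icc (e + 1) q ∪ Finset.Icc c e = Finset.Icc p q := by
    ext n; simp only [Finset.mem_union, Finset.mem_Icc]; omega
  have hpe : Finset.Icc p (c - 1) ∪ Finset.Icc c e = Finset.Icc p e := by
    ext n; simp only [Finset.mem_union, Finset.mem_Icc]; omega
  have hcq : Finset.Icc (e + 1) q ∪ Finset.Icc c e = Finset.Icc c q := by
    ext n; simp only [Finset.mem_union, Finset.mem_Icc]; omega
  rw [hu, hv, hw, ← cyl_union, ← cyl_union, ← cyl_union, ← cyl_union, hpq, hpe, hcq]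
  exact hM.measure_cyl_Icc_mul_eq_of_block hshift hpos hpc hce heq ω

lemma measure_cylinder_inter_mul_eq (hshift : Measure.map shiftMap P = P) (hpos : PosCyl P)
    (hM : MarkovOrder P D) {p c e q : ℤ} (hpc : p ≤ c) (hce : c + D ≤ e + 1) (heq : e ≤ q)
    (w : ℤ → Pat N) (A : Set (Finset.Icc p (c - 1) → Pat N))
    (B : Set (Finset.Icc (e + 1) q → Pat N)) :
    P (cylinder _ A ∩ cylinder _ B ∩ cyl (Finset.Icc c e) w) * P (cyl (Finset.Icc c e) w)
      = P (cylinder _ A ∩ cyl (Finset.Icc c e) w) * P (cylinder _ B ∩ cyl (Finset.Icc c e) w) := by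
  have hZ := measurableSet_cyl (Finset.Icc c e) w
  have hA := Finset.measurable_restrict (X := fun _ => Pat N) _ A.toFinite.measurableSet
  have hB := Finset.measurable_restrict (X := fun _ => Pat N) _ B.toFinite.measurableSet
  have key := measure_preimage_inter_mul_eq (μ := P.restrict (cyl (Finset.Icc c e) w))
    (Finset.measurable_restrict _) (Finset.measurable_restrict _) ?_ A B
  · simp only [cylinder]
    simpa [Measure.restrict_apply, hZ, hA, hB, hA.inter hB] using key
  intro a b
  obtain ⟨u, rfl⟩ : ∃ u : ℤ → Pat N, (Finset.Icc p (c - 1)).restrict u = a :=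
    Subtype.surjective_restrict (β := fun _ => Pat N) _ a
  obtain ⟨v, rfl⟩ : ∃ v : ℤ → Pat N, (Finset.Icc (e + 1) q).restrict v = b :=
    Subtype.surjective_restrict (β := fun _ => Pat N) _ b
  rw [restrict_preimage_singleton_eq_cyl, restrict_preimage_singleton_eq_cyl,
    Measure.restrict_apply_univ, Measure.restrict_apply (measurableSet_cyl _ _),
    Measure.restrict_apply (measurableSet_cyl _ _),
    Measure.restrict_apply ((measurableSet_cyl _ _).inter (measurableSet_cyl _ _))]
  exact hM.measure_cyl_inter_mul_eq hshift hpos hpc hce heq u v w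

lemma measure_inter_mul_eq_of_dependsOn (hshift : Measure.map shiftMap P = P)
    (hpos : PosCyl P) (hM : MarkovOrder P D) {c e : ℤ} (hce : c + D ≤ e + 1) (w : ℤ → Pat N)
    {G H : Set (Conf N)} {SG SH : Set ℤ} (hSG : SG.Finite) (hSH : SH.Finite)
    (hSGc : SG ⊆ Set.Iio c) (hSHe : SH ⊆ Set.Ioi e)
    (hG : DependsOn (· ∈ G) SG) (hH : DependsOn (· ∈ H) SH) :
    P (G ∩ H ∩ cyl (Finset.Icc c e) w) * P (cyl (Finset.Icc c e) w)
      = P (G ∩ cyl (Finset.Icc c e) w) * P (H ∩ cyl (Finset.Icc c e) w) := by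
  obtain ⟨p, hp⟩ := hSG.bddBelow
  obtain ⟨q, hq⟩ := hSH.bddAbove
  have hG' : DependsOn (· ∈ G) (Finset.Icc (min p c) (c - 1) : Set ℤ) :=
    hG.mono fun n hn => by
      have := hp hn
      have := hSGc hn
      simp only [Set.mem_Iio, Finset.coe_Icc, Set.mem_Icc] at *
      omega
  have hH' : DependsOn (· ∈ H) (Finset.Icc (e + 1) (max q e) : Set ℤ) :=
    hH.mono fun n hn => by
      have := hq hn
      have := hSHe hn
      simp only [Set.mem_Ioi, Finset.coe_Icc, Set.mem_Icc] at *
      omega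
  rw [← cylinder_restrict_image_of_dependsOn hG', ← cylinder_restrict_image_of_dependsOn hH']
  exact hM.measure_cylinder_inter_mul_eq hshift hpos (min_le_right p c) hce (le_max_right q e) w
    _ _

lemma measure_preimage_binMap_inter_mul_eq (hshift : Measure.map shiftMap P = P)
    (hpos : PosCyl P) (hM : MarkovOrder P D) {τ : ℕ} (hτD : D ≤ τ) (m : ℤ)
    {E : Set (Conf N)} {S : Set ℤ} (hS : S.Finite) (hSm : S ⊆ Set.Iio m)
    (hE : DependsOn (· ∈ E) S) {F : Set (Conf N)} {T : Set ℤ} (hT : T.Finite)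
    (hTm : T ⊆ Set.Ioi m) (hF : DependsOn (· ∈ F) T) :
    P (binMap τ ⁻¹' E ∩ binMap τ ⁻¹' F ∩ cyl (binWindow τ m) fun _ => zPat N)
        * P (cyl (binWindow τ m) fun _ => zPat N)
      = P (binMap τ ⁻¹' E ∩ cyl (binWindow τ m) fun _ => zPat N)
        * P (binMap τ ⁻¹' F ∩ cyl (binWindow τ m) fun _ => zPat N) :=
  hM.measure_inter_mul_eq_of_dependsOn hshift hpos (c := m * τ) (e := m * τ + τ - 1)
    (by linarith [Int.ofNat_le.2 hτD]) _
    (hS.biUnion fun n _ => (binWindow τ n).finite_toSet)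
    (hT.biUnion fun n _ => (binWindow τ n).finite_toSet)
    (biUnion_binWindow_subset_Iio τ hSm) (biUnion_binWindow_subset_Ioi τ hTm)
    (dependsOn_mem_preimage_binMap τ hE) (dependsOn_mem_preimage_binMap τ hF)

end MarkovOrder

theorem binned_conditional_independence_given_empty_window_general
    {N D τ : ℕ} (hτD : D ≤ τ)
    (P : Measure (Conf N)) [IsProbabilityMeasure P]
    (hshift : Measure.map shiftMap P = P)
    (hpos : PosCyl P) (hMarkov : MarkovOrder P D)
    (ℓ : ℕ) (hℓ : 1 ≤ ℓ) (x : ℤ → Pat N) (hz : x (-(ℓ : ℤ)) = zPat N)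
    (s : Finset ℤ) (hs : ∀ n ∈ s, n ≤ -(ℓ : ℤ) - 1) (u : ℤ → Pat N)
    (a : Pat N) :
    (Measure.map (binMap τ) P)
        (({ω | ω 0 = a} ∩ cyl s u) ∩ cyl (Finset.Icc (-(ℓ : ℤ)) (-1)) x)
      * (Measure.map (binMap τ) P) (cyl (Finset.Icc (-(ℓ : ℤ)) (-1)) x)
    = (Measure.map (binMap τ) P)
        ({ω | ω 0 = a} ∩ cyl (Finset.Icc (-(ℓ : ℤ)) (-1)) x)
      * (Measure.map (binMap τ) P) (cyl s u ∩ cyl (Finset.Icc (-(ℓ : ℤ)) (-1)) x) := by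
  have hrecent : binMap τ ⁻¹' cyl (Finset.Icc (-(ℓ : ℤ)) (-1)) x
      = binMap τ ⁻¹' cyl (Finset.Icc (-ℓ + 1) (-1)) x ∩ cyl (binWindow τ (-ℓ)) fun _ => zPat N := by
    rw [← Finset.insert_Icc_add_one_left_eq_Icc (by omega), cyl_insert, hz, Set.preimage_inter,
      preimage_binMap_setOf_eq_zPat, Set.inter_comm]
  have hpast : (s : Set ℤ) ⊆ Set.Iio (-ℓ) := fun n hn => Set.mem_Iio.2 (by linarith [hs n hn])
  have hfuture : {0} ∪ (Finset.Icc (-(ℓ : ℤ) + 1) (-1) : Set ℤ) ⊆ Set.Ioi (-(ℓ : ℤ)) := by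
    intro n hn
    simp only [Set.singleton_union, Set.mem_insert_iff, Finset.coe_Icc, Set.mem_Icc] at hn
    exact Set.mem_Ioi.2 (by omega)
  have hFM := hMarkov.measure_preimage_binMap_inter_mul_eq hshift hpos hτD (-ℓ) s.finite_toSet
    hpast (dependsOn_mem_cyl s u) ((Set.finite_singleton 0).union (Finset.finite_toSet _))
    hfuture (dependsOn_mem_inter (dependsOn_mem_setOf_apply_eq 0 a)
      (dependsOn_mem_cyl (Finset.Icc (-ℓ + 1) (-1)) x))
  have hM := hMarkov.measure_preimage_binMap_inter_mul_eq hshift hpos hτD (-ℓ) s.finite_toSet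
    hpast (dependsOn_mem_cyl s u) (Finset.finite_toSet _) (Set.subset_union_right.trans hfuture)
    (dependsOn_mem_cyl (Finset.Icc (-ℓ + 1) (-1)) x)
  have hbin := measurable_binMap (N := N) τ
  have hF := measurableSet_setOf_apply_eq 0 a
  have hG := measurableSet_cyl s u
  have hC := measurableSet_cyl (Finset.Icc (-(ℓ : ℤ)) (-1)) x
  rw [Measure.map_apply hbin ((hF.inter hG).inter hC), Measure.map_apply hbin hC,
    Measure.map_apply hbin (hF.inter hC), Measure.map_apply hbin (hG.inter hC)]
  simp only [Set.preimage_inter, hrecent] at hFM ⊢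
  exact measure_inter_mul_eq_given_inter (hpos _ _).ne' hFM hM

/-- Conditional independence of the binned present from the far past given a past
ending in an empty window: if `x(-ℓ) = z`, `C = {X₋ℓ = x(-ℓ), …, X₋₁ = x(-1)}` and
`A₀` is a finite cylinder depending only on coordinates `n ≤ -ℓ - 1`, then
`P⁽ᵇ⁾({X₀ = a} ∩ A₀ ∩ C) ⬝ P⁽ᵇ⁾(C) = P⁽ᵇ⁾({X₀ = a} ∩ C) ⬝ P⁽ᵇ⁾(A₀ ∩ C)`. -/
theorem binned_conditional_independence_given_empty_window
    {N D τ : ℕ} (hN : 1 ≤ N) (hD : 1 ≤ D) (hτD : D ≤ τ)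
    (P : Measure (Conf N)) [IsProbabilityMeasure P]
    (hshift : Measure.map shiftMap P = P)
    (hpos : PosCyl P) (hMarkov : MarkovOrder P D)
    (ℓ : ℕ) (hℓ : 1 ≤ ℓ) (x : ℤ → Pat N) (hz : x (-(ℓ : ℤ)) = zPat N)
    (s : Finset ℤ) (hs : ∀ n ∈ s, n ≤ -(ℓ : ℤ) - 1) (u : ℤ → Pat N)
    (a : Pat N) :
    (Measure.map (binMap τ) P)
        (({ω | ω 0 = a} ∩ cyl s u) ∩ cyl (Finset.Icc (-(ℓ : ℤ)) (-1)) x)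
      * (Measure.map (binMap τ) P) (cyl (Finset.Icc (-(ℓ : ℤ)) (-1)) x)
    = (Measure.map (binMap τ) P)
        ({ω | ω 0 = a} ∩ cyl (Finset.Icc (-(ℓ : ℤ)) (-1)) x)
      * (Measure.map (binMap τ) P) (cyl s u ∩ cyl (Finset.Icc (-(ℓ : ℤ)) (-1)) x) :=
  binned_conditional_independence_given_empty_window_general hτD P hshift hpos hMarkov ℓ hℓ x hz s
    hs u a
end

section
/- Binning destroys the Markov property: explicit counterexample. Assume moreover that the transition probabilities are p(0|1) = p(1|0) = 3/4 and p(1|1) = p(0|0) = 1/4, with the stationary marginal μ(0) = μ(1) = 1/2. Then the binned process is not a Markov chain of order 1: P⁽ᵇ⁾(X₂ = 0 | X₁ = 1, X₀ = 0) ≠ P⁽ᵇ⁾(X₂ = 0 | X₁ = 1); equivalently, in cross-multiplied form, P⁽ᵇ⁾(X₂ = 0 ∧ X₁ = 1 ∧ X₀ = 0) · P⁽ᵇ⁾(X₁ = 1) ≠ P⁽ᵇ⁾(X₂ = 0 ∧ X₁ = 1) · P⁽ᵇ⁾(X₁ = 1 ∧ X₀ = 0). -/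
open MeasureTheory Filter

/-- Spike trains of a single neuron: bi-infinite binary sequences. -/
abbrev Conf1 : Type := ℤ → Bool

/-- Conditional probability of cylinder sets, defined as the ratio of the
corresponding cylinder probabilities. -/
noncomputable def condProb1 (P : Measure Conf1) (E C : Set Conf1) : ℝ :=
  (P (E ∩ C)).toReal / (P C).toReal

/-- The left shift. -/
def shiftMap1 : Conf1 → Conf1 := fun ω n => ω (n + 1)

/-- The binning map with window `τ = 2`: `bin2 ω m = ω(2m) || ω(2m+1)`. -/
def bin2 (ω : Conf1) : Conf1 := fun m => ω (2 * m) || ω (2 * m + 1)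

/-- `P` is (stationary) Markov of order `1`: conditioning the present on any finite
past of length `m ≥ 1` equals conditioning on the last coordinate. -/
def MarkovOne (P : Measure Conf1) : Prop :=
  ∀ (a : Bool) (m : ℕ), 1 ≤ m → ∀ w : ℤ → Bool,
    condProb1 P {ω | ω 0 = a} {ω | ∀ j ∈ Finset.Icc (-(m : ℤ)) (-1), ω j = w j}
      = condProb1 P {ω | ω 0 = a} {ω | ω (-1) = w (-1)}

/-- Every finite cylinder has strictly positive probability. -/
def PosCyl1 (P : Measure Conf1) : Prop :=
  ∀ (s : Finset ℤ) (v : ℤ → Bool), 0 < P {ω | ∀ n ∈ s, ω n = v n}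

-- helpers
lemma meas_coord (j : ℤ) (b : Bool) : MeasurableSet {ω : Conf1 | ω j = b} := by
  have : {ω : Conf1 | ω j = b} = (fun ω : Conf1 => ω j) ⁻¹' {b} := by ext ω; simp
  rw [this]
  exact measurable_pi_apply j (measurableSet_singleton b)

lemma meas_cylG (s : Finset ℤ) (f : ℤ → Bool) :
    MeasurableSet {ω : Conf1 | ∀ j ∈ s, ω j = f j} := by
  have h : {ω : Conf1 | ∀ j ∈ s, ω j = f j} = ⋂ j ∈ s, {ω : Conf1 | ω j = f j} := by
    ext ω; simp
  rw [h]
  exact MeasurableSet.biInter s.countable_toSet fun j _ => meas_coord j (f j)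

lemma meas_shift : Measurable shiftMap1 :=
  measurable_pi_lambda _ fun n => measurable_pi_apply (n + 1)

lemma meas_bin2 : Measurable bin2 := by
  apply measurable_pi_lambda
  intro m
  have : (fun ω : Conf1 => bin2 ω m)
      = (fun p : Bool × Bool => p.1 || p.2) ∘ (fun ω : Conf1 => (ω (2*m), ω (2*m+1))) := rfl
  rw [this]
  exact (measurable_of_countable _).comp
    ((measurable_pi_apply (2*m)).prodMk (measurable_pi_apply (2*m+1)))

lemma shift_inv (P : Measure Conf1) (hshift : Measure.map shiftMap1 P = P)
    {S : Set Conf1} (hS : MeasurableSet S) : P S = P (shiftMap1 ⁻¹' S) := by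
  conv_lhs => rw [← hshift]
  exact Measure.map_apply meas_shift hS

def wordSet (w : List Bool) : Set Conf1 :=
  {ω | ∀ j ∈ Finset.Icc (1 - (w.length : ℤ)) 0, ω j = w.getD (-j).toNat false}

lemma meas_wordSet (w : List Bool) : MeasurableSet (wordSet w) := meas_cylG _ _

lemma wordSet_singleton (c : Bool) : wordSet [c] = {ω : Conf1 | ω 0 = c} := by
  ext ω
  simp only [wordSet, Set.mem_setOf_eq, Finset.mem_Icc, List.length_cons, List.length_nil]
  constructor
  · intro h
    have := h 0 (by constructor <;> omega)
    simpa using this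
  · intro h j hj
    have : j = 0 := by omega
    subst this
    simpa using h

lemma chain_step (P : Measure Conf1) [IsProbabilityMeasure P]
    (hshift : Measure.map shiftMap1 P = P) (hpos : PosCyl1 P) (hMarkov : MarkovOne P)
    (a b : Bool) (t : List Bool) :
    (P (wordSet (a :: b :: t))).toReal
      = condProb1 P {ω | ω 1 = a} {ω | ω 0 = b} * (P (wordSet (b :: t))).toReal := by
  set m : ℕ := t.length + 1 with hm
  set v : ℤ → Bool := fun j => (a :: b :: t).getD (-j).toNat false with hv
  have hM := hMarkov a m (Nat.le_add_left 1 _) v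
  -- the intersected set is the full word cylinder
  have hset1 : {ω : Conf1 | ω 0 = a} ∩ {ω : Conf1 | ∀ j ∈ Finset.Icc (-(m:ℤ)) (-1), ω j = v j}
      = wordSet (a :: b :: t) := by
    ext ω
    simp only [wordSet, Set.mem_inter_iff, Set.mem_setOf_eq, Finset.mem_Icc,
      List.length_cons, hm, hv]
    constructor
    · rintro ⟨h0, hp⟩ j hj
      rcases eq_or_ne j 0 with rfl | hne
      · simpa using h0
      · refine hp j ⟨by push_cast; omega, by omega⟩
    · intro h
      refine ⟨by simpa using h 0 ⟨by push_cast; omega, le_refl 0⟩, fun j hj => h j ⟨by push_cast at hj ⊢; omega, by push_cast at hj ⊢; omega⟩⟩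
  -- the past has the same probability as the shorter word cylinder
  have hshift_past : P {ω : Conf1 | ∀ j ∈ Finset.Icc (-(m:ℤ)) (-1), ω j = v j}
      = P (wordSet (b :: t)) := by
    rw [shift_inv P hshift (meas_cylG _ _)]
    congr 1
    ext ω
    simp only [Set.mem_preimage, Set.mem_setOf_eq, Finset.mem_Icc, shiftMap1,
      wordSet, List.length_cons, hv]
    constructor
    · intro h j hj
      have h' := h (j - 1) ⟨by push_cast at hj ⊢; omega, by push_cast at hj ⊢; omega⟩
      rw [show j - 1 + 1 = j by ring] at h'
      rw [h']
      have h2 : (-(j-1)).toNat = (-j).toNat + 1 := by push_cast at hj; omega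
      rw [h2, List.getD_cons_succ]
    · intro h j hj
      have h' := h (j + 1) ⟨by push_cast at hj ⊢; omega, by push_cast at hj ⊢; omega⟩
      rw [h']
      have h2 : (-j).toNat = (-(j+1)).toNat + 1 := by push_cast at hj; omega
      rw [h2, List.getD_cons_succ]
  -- positivity of the shorter cylinder
  have hposb : (P (wordSet (b :: t))).toReal ≠ 0 := by
    have := hpos (Finset.Icc (1 - ((b :: t).length : ℤ)) 0)
      (fun j => (b :: t).getD (-j).toNat false)
    exact (ENNReal.toReal_pos this.ne' (measure_ne_top P _)).ne'
  -- RHS conditional probability equals the one-step transition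
  have hr : condProb1 P {ω : Conf1 | ω 0 = a} {ω : Conf1 | ω (-1) = v (-1)}
      = condProb1 P {ω : Conf1 | ω 1 = a} {ω : Conf1 | ω 0 = b} := by
    have hvb : v (-1) = b := by simp [hv]
    rw [hvb]
    unfold condProb1
    have h1 : P ({ω : Conf1 | ω 0 = a} ∩ {ω : Conf1 | ω (-1) = b})
        = P ({ω : Conf1 | ω 1 = a} ∩ {ω : Conf1 | ω 0 = b}) := by
      rw [shift_inv P hshift ((meas_coord 0 a).inter (meas_coord (-1) b))]
      congr 1
      all_goals ext ω; simp [shiftMap1, Set.mem_inter_iff]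
    have h2 : P {ω : Conf1 | ω (-1) = b} = P {ω : Conf1 | ω 0 = b} := by
      rw [shift_inv P hshift (meas_coord (-1) b)]
      congr 1
      all_goals ext ω; simp [shiftMap1]
    rw [h1, h2]
  rw [hr] at hM
  unfold condProb1 at hM
  rw [hset1, hshift_past] at hM
  rw [div_eq_iff hposb] at hM
  rw [hM]
  unfold condProb1
  ring

lemma shift_iterate (n : ℕ) (ω : Conf1) (j : ℤ) : (shiftMap1^[n]) ω j = ω (j + n) := by
  induction n generalizing ω j with
  | zero => simp
  | succ n ih =>
    rw [Function.iterate_succ_apply]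
    rw [ih]
    show ω (j + n + 1) = ω (j + (n+1 : ℕ))
    congr 1
    push_cast
    ring

lemma shiftn_inv (P : Measure Conf1) (hshift : Measure.map shiftMap1 P = P) (n : ℕ)
    {S : Set Conf1} (hS : MeasurableSet S) : P S = P ((shiftMap1^[n]) ⁻¹' S) := by
  induction n with
  | zero => simp
  | succ n ih =>
    rw [ih, shift_inv P hshift (meas_shift.iterate n hS)]
    rw [← Set.preimage_comp, ← Function.iterate_succ]

lemma reloc (P : Measure Conf1) (hshift : Measure.map shiftMap1 P = P)
    (w : List Bool) (n : ℕ) :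
    P (wordSet w) = P {ω : Conf1 | ∀ j ∈ Finset.Icc (1 - (w.length : ℤ)) 0,
      ω (j + n) = w.getD (-j).toNat false} := by
  rw [shiftn_inv P hshift n (meas_wordSet w)]
  congr 1
  ext ω
  simp [wordSet, Set.mem_preimage, shift_iterate]

example : {ω : Conf1 | ∀ j ∈ Finset.Icc (1-((2:ℕ):ℤ)) 0, ω (j + 3) = [false,false].getD (-j).toNat false} = {ω : Conf1 | ω 2 = false ∧ ω 3 = false} := by
  ext ω
  simp only [Set.mem_setOf_eq, Finset.mem_Icc]
  constructor
  · intro h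
    exact ⟨by simpa using h (-1) (by omega), by simpa using h 0 (by omega)⟩
  · rintro ⟨ha, hb⟩ j ⟨h1, h2⟩
    interval_cases j <;> simp_all

lemma meas2 (j k : ℤ) (a b : Bool) : MeasurableSet {ω : Conf1 | ω j = a ∧ ω k = b} :=
  (meas_coord j a).inter (meas_coord k b)

lemma meas4 (j k l m : ℤ) (a b c d : Bool) :
    MeasurableSet {ω : Conf1 | ω j = a ∧ ω k = b ∧ ω l = c ∧ ω m = d} :=
  (meas_coord j a).inter ((meas_coord k b).inter ((meas_coord l c).inter (meas_coord m d)))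

lemma meas6 (j1 j2 j3 j4 j5 j6 : ℤ) (a b c d e f : Bool) :
    MeasurableSet {ω : Conf1 | ω j1 = a ∧ ω j2 = b ∧ ω j3 = c ∧ ω j4 = d ∧ ω j5 = e ∧ ω j6 = f} :=
  (meas_coord j1 a).inter ((meas_coord j2 b).inter ((meas_coord j3 c).inter
    ((meas_coord j4 d).inter ((meas_coord j5 e).inter (meas_coord j6 f)))))

example (P : Measure Conf1) (hshift : Measure.map shiftMap1 P = P) :
    P {ω : Conf1 | ω 2 = false ∧ ω 3 = false} = P (wordSet [false, false]) := by
  rw [reloc P hshift [false, false] 3]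
  congr 1
  ext ω
  simp only [Set.mem_setOf_eq, Finset.mem_Icc, List.length_cons, List.length_nil]
  constructor
  · rintro ⟨ha, hb⟩ j ⟨h1, h2⟩
    interval_cases j <;> simp_all
  · intro h
    exact ⟨by simpa using h (-1) (by omega), by simpa using h 0 (by omega)⟩

example (P : Measure Conf1) (hshift : Measure.map shiftMap1 P = P) :
    P {ω : Conf1 | ω 0 = false ∧ ω 1 = false ∧ ω 2 = false ∧ ω 3 = true ∧ ω 4 = false ∧ ω 5 = false}
      = P (wordSet [false, false, true, false, false, false]) := by
  rw [reloc P hshift [false, false, true, false, false, false] 5]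
  congr 1
  ext ω
  simp only [Set.mem_setOf_eq, Finset.mem_Icc, List.length_cons, List.length_nil]
  constructor
  · rintro ⟨h0, h1, h2, h3, h4, h5⟩ j ⟨hj1, hj2⟩
    interval_cases j <;> simp_all
  · intro h
    refine ⟨by simpa using h (-5) (by omega), by simpa using h (-4) (by omega),
      by simpa using h (-3) (by omega), by simpa using h (-2) (by omega),
      by simpa using h (-1) (by omega), by simpa using h 0 (by omega)⟩

lemma meas3 (j k l : ℤ) (a b c : Bool) :
    MeasurableSet {ω : Conf1 | ω j = a ∧ ω k = b ∧ ω l = c} :=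
  (meas_coord j a).inter ((meas_coord k b).inter (meas_coord l c))


set_option maxHeartbeats 2000000 in
/-- Binning destroys the Markov property: explicit counterexample. With transition
probabilities `p(0|1) = p(1|0) = 3/4`, `p(1|1) = p(0|0) = 1/4` and stationary
marginal `μ(0) = μ(1) = 1/2` (identifying `0` with `false`, `1` with `true`), the
binned process is not a Markov chain of order `1`:
`P⁽ᵇ⁾(X₂ = 0 | X₁ = 1, X₀ = 0) ≠ P⁽ᵇ⁾(X₂ = 0 | X₁ = 1)`, and its cross-multiplied
form holds as well. -/
theorem binning_destroys_markov_counterexample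
    (P : Measure Conf1) [IsProbabilityMeasure P]
    (hshift : Measure.map shiftMap1 P = P)
    (hpos : PosCyl1 P) (hMarkov : MarkovOne P)
    (hp01 : condProb1 P {ω | ω 1 = false} {ω | ω 0 = true} = 3 / 4)
    (hp10 : condProb1 P {ω | ω 1 = true} {ω | ω 0 = false} = 3 / 4)
    (hp11 : condProb1 P {ω | ω 1 = true} {ω | ω 0 = true} = 1 / 4)
    (hp00 : condProb1 P {ω | ω 1 = false} {ω | ω 0 = false} = 1 / 4)
    (hμ0 : (P {ω | ω 0 = false}).toReal = 1 / 2)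
    (hμ1 : (P {ω | ω 0 = true}).toReal = 1 / 2) :
    condProb1 (Measure.map bin2 P) {x | x 2 = false}
        {x | x 1 = true ∧ x 0 = false}
      ≠ condProb1 (Measure.map bin2 P) {x | x 2 = false} {x | x 1 = true}
    ∧ (Measure.map bin2 P) {x | x 2 = false ∧ x 1 = true ∧ x 0 = false}
        * (Measure.map bin2 P) {x | x 1 = true}
      ≠ (Measure.map bin2 P) {x | x 2 = false ∧ x 1 = true}
        * (Measure.map bin2 P) {x | x 1 = true ∧ x 0 = false} := by
  -- word probabilities
  have W1 : (P (wordSet [false])).toReal = 1/2 := by rw [wordSet_singleton]; exact hμ0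
  have W2 : (P (wordSet [false, false])).toReal = 1/8 := by
    rw [chain_step P hshift hpos hMarkov false false [], hp00, W1]; norm_num
  have W4 : (P (wordSet [false, false, false, false])).toReal = 1/128 := by
    rw [chain_step P hshift hpos hMarkov false false [false, false],
      chain_step P hshift hpos hMarkov false false [false],
      chain_step P hshift hpos hMarkov false false [], wordSet_singleton, hp00, hμ0]
    norm_num
  have W6a : (P (wordSet [false, false, true, false, false, false])).toReal = 9/2048 := by
    rw [chain_step P hshift hpos hMarkov false false [true, false, false, false],
      chain_step P hshift hpos hMarkov false true [false, false, false],
      chain_step P hshift hpos hMarkov true false [false, false],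
      chain_step P hshift hpos hMarkov false false [false],
      chain_step P hshift hpos hMarkov false false [], wordSet_singleton,
      hp00, hp01, hp10, hμ0]
    norm_num
  have W6b : (P (wordSet [false, false, false, true, false, false])).toReal = 9/2048 := by
    rw [chain_step P hshift hpos hMarkov false false [false, true, false, false],
      chain_step P hshift hpos hMarkov false false [true, false, false],
      chain_step P hshift hpos hMarkov false true [false, false],
      chain_step P hshift hpos hMarkov true false [false],
      chain_step P hshift hpos hMarkov false false [], wordSet_singleton,
      hp00, hp01, hp10, hμ0]
    norm_num
  have W6c : (P (wordSet [false, false, true, true, false, false])).toReal = 9/2048 := by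
    rw [chain_step P hshift hpos hMarkov false false [true, true, false, false],
      chain_step P hshift hpos hMarkov false true [true, false, false],
      chain_step P hshift hpos hMarkov true true [false, false],
      chain_step P hshift hpos hMarkov true false [false],
      chain_step P hshift hpos hMarkov false false [], wordSet_singleton,
      hp00, hp01, hp10, hp11, hμ0]
    norm_num
  -- relocations
  have rA2 : P {ω : Conf1 | ω 0 = false ∧ ω 1 = false} = P (wordSet [false, false]) := by
    rw [reloc P hshift [false, false] 1]
    congr 1; ext ω
    simp only [Set.mem_setOf_eq, Finset.mem_Icc, List.length_cons, List.length_nil]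
    constructor
    · rintro ⟨ha, hb⟩ j ⟨h1, h2⟩; interval_cases j <;> simp_all
    · intro h; exact ⟨by simpa using h (-1) (by omega), by simpa using h 0 (by omega)⟩
  have rB2 : P {ω : Conf1 | ω 2 = false ∧ ω 3 = false} = P (wordSet [false, false]) := by
    rw [reloc P hshift [false, false] 3]
    congr 1; ext ω
    simp only [Set.mem_setOf_eq, Finset.mem_Icc, List.length_cons, List.length_nil]
    constructor
    · rintro ⟨ha, hb⟩ j ⟨h1, h2⟩; interval_cases j <;> simp_all
    · intro h; exact ⟨by simpa using h (-1) (by omega), by simpa using h 0 (by omega)⟩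
  have rC2 : P {ω : Conf1 | ω 4 = false ∧ ω 5 = false} = P (wordSet [false, false]) := by
    rw [reloc P hshift [false, false] 5]
    congr 1; ext ω
    simp only [Set.mem_setOf_eq, Finset.mem_Icc, List.length_cons, List.length_nil]
    constructor
    · rintro ⟨ha, hb⟩ j ⟨h1, h2⟩; interval_cases j <;> simp_all
    · intro h; exact ⟨by simpa using h (-1) (by omega), by simpa using h 0 (by omega)⟩
  have rA4 : P {ω : Conf1 | ω 0 = false ∧ ω 1 = false ∧ ω 2 = false ∧ ω 3 = false}
      = P (wordSet [false, false, false, false]) := by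
    rw [reloc P hshift [false, false, false, false] 3]
    congr 1; ext ω
    simp only [Set.mem_setOf_eq, Finset.mem_Icc, List.length_cons, List.length_nil]
    constructor
    · rintro ⟨h0, h1, h2, h3⟩ j ⟨hj1, hj2⟩; interval_cases j <;> simp_all
    · intro h
      exact ⟨by simpa using h (-3) (by omega), by simpa using h (-2) (by omega),
        by simpa using h (-1) (by omega), by simpa using h 0 (by omega)⟩
  have rB4 : P {ω : Conf1 | ω 2 = false ∧ ω 3 = false ∧ ω 4 = false ∧ ω 5 = false}
      = P (wordSet [false, false, false, false]) := by
    rw [reloc P hshift [false, false, false, false] 5]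
    congr 1; ext ω
    simp only [Set.mem_setOf_eq, Finset.mem_Icc, List.length_cons, List.length_nil]
    constructor
    · rintro ⟨h0, h1, h2, h3⟩ j ⟨hj1, hj2⟩; interval_cases j <;> simp_all
    · intro h
      exact ⟨by simpa using h (-3) (by omega), by simpa using h (-2) (by omega),
        by simpa using h (-1) (by omega), by simpa using h 0 (by omega)⟩
  have rS1 : P {ω : Conf1 | ω 0 = false ∧ ω 1 = false ∧ ω 2 = false ∧ ω 3 = true ∧ ω 4 = false ∧ ω 5 = false}
      = P (wordSet [false, false, true, false, false, false]) := by
    rw [reloc P hshift [false, false, true, false, false, false] 5]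
    congr 1; ext ω
    simp only [Set.mem_setOf_eq, Finset.mem_Icc, List.length_cons, List.length_nil]
    constructor
    · rintro ⟨h0, h1, h2, h3, h4, h5⟩ j ⟨hj1, hj2⟩; interval_cases j <;> simp_all
    · intro h
      exact ⟨by simpa using h (-5) (by omega), by simpa using h (-4) (by omega),
        by simpa using h (-3) (by omega), by simpa using h (-2) (by omega),
        by simpa using h (-1) (by omega), by simpa using h 0 (by omega)⟩
  have rS2 : P {ω : Conf1 | ω 0 = false ∧ ω 1 = false ∧ ω 2 = true ∧ ω 3 = false ∧ ω 4 = false ∧ ω 5 = false}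
      = P (wordSet [false, false, false, true, false, false]) := by
    rw [reloc P hshift [false, false, false, true, false, false] 5]
    congr 1; ext ω
    simp only [Set.mem_setOf_eq, Finset.mem_Icc, List.length_cons, List.length_nil]
    constructor
    · rintro ⟨h0, h1, h2, h3, h4, h5⟩ j ⟨hj1, hj2⟩; interval_cases j <;> simp_all
    · intro h
      exact ⟨by simpa using h (-5) (by omega), by simpa using h (-4) (by omega),
        by simpa using h (-3) (by omega), by simpa using h (-2) (by omega),
        by simpa using h (-1) (by omega), by simpa using h 0 (by omega)⟩
  have rS3 : P {ω : Conf1 | ω 0 = false ∧ ω 1 = false ∧ ω 2 = true ∧ ω 3 = true ∧ ω 4 = false ∧ ω 5 = false}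
      = P (wordSet [false, false, true, true, false, false]) := by
    rw [reloc P hshift [false, false, true, true, false, false] 5]
    congr 1; ext ω
    simp only [Set.mem_setOf_eq, Finset.mem_Icc, List.length_cons, List.length_nil]
    constructor
    · rintro ⟨h0, h1, h2, h3, h4, h5⟩ j ⟨hj1, hj2⟩; interval_cases j <;> simp_all
    · intro h
      exact ⟨by simpa using h (-5) (by omega), by simpa using h (-4) (by omega),
        by simpa using h (-3) (by omega), by simpa using h (-2) (by omega),
        by simpa using h (-1) (by omega), by simpa using h 0 (by omega)⟩
  -- binned probabilities
  have q1 : ((Measure.map bin2 P) {x : Conf1 | x 1 = true}).toReal = 7/8 := by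
    rw [Measure.map_apply meas_bin2 (meas_coord 1 true)]
    have hpre : bin2 ⁻¹' {x : Conf1 | x 1 = true}
        = {ω : Conf1 | ω 2 = false ∧ ω 3 = false}ᶜ := by
      ext ω
      simp only [Set.mem_preimage, Set.mem_setOf_eq, Set.mem_compl_iff, bin2]
      norm_num
      cases h2 : ω 2 <;> cases h3 : ω 3 <;> simp_all
    rw [hpre, prob_compl_eq_one_sub (meas2 2 3 false false), rB2,
      ENNReal.toReal_sub_of_le prob_le_one ENNReal.one_ne_top, ENNReal.toReal_one, W2]
    norm_num
  have q2 : ((Measure.map bin2 P) {x : Conf1 | x 1 = true ∧ x 0 = false}).toReal = 15/128 := by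
    rw [Measure.map_apply meas_bin2 (meas2 1 0 true false)]
    have hpre : bin2 ⁻¹' {x : Conf1 | x 1 = true ∧ x 0 = false}
        = {ω : Conf1 | ω 0 = false ∧ ω 1 = false}
          \ {ω : Conf1 | ω 0 = false ∧ ω 1 = false ∧ ω 2 = false ∧ ω 3 = false} := by
      ext ω
      simp only [Set.mem_preimage, Set.mem_setOf_eq, Set.mem_diff, bin2]
      norm_num
      cases h0 : ω 0 <;> cases h1 : ω 1 <;> cases h2 : ω 2 <;> cases h3 : ω 3 <;> simp_all
    have hsub : {ω : Conf1 | ω 0 = false ∧ ω 1 = false ∧ ω 2 = false ∧ ω 3 = false}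
        ⊆ {ω : Conf1 | ω 0 = false ∧ ω 1 = false} := fun ω h => ⟨h.1, h.2.1⟩
    rw [hpre, measure_diff hsub (meas4 0 1 2 3 false false false false).nullMeasurableSet
      (measure_ne_top P _),
      ENNReal.toReal_sub_of_le (measure_mono hsub) (measure_ne_top P _),
      rA2, rA4, W2, W4]
    norm_num
  have q3 : ((Measure.map bin2 P) {x : Conf1 | x 2 = false ∧ x 1 = true}).toReal = 15/128 := by
    rw [Measure.map_apply meas_bin2 (meas2 2 1 false true)]
    have hpre : bin2 ⁻¹' {x : Conf1 | x 2 = false ∧ x 1 = true}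
        = {ω : Conf1 | ω 4 = false ∧ ω 5 = false}
          \ {ω : Conf1 | ω 2 = false ∧ ω 3 = false ∧ ω 4 = false ∧ ω 5 = false} := by
      ext ω
      simp only [Set.mem_preimage, Set.mem_setOf_eq, Set.mem_diff, bin2]
      norm_num
      cases h2 : ω 2 <;> cases h3 : ω 3 <;> cases h4 : ω 4 <;> cases h5 : ω 5 <;> simp_all
    have hsub : {ω : Conf1 | ω 2 = false ∧ ω 3 = false ∧ ω 4 = false ∧ ω 5 = false}
        ⊆ {ω : Conf1 | ω 4 = false ∧ ω 5 = false} := fun ω h => ⟨h.2.2.1, h.2.2.2⟩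
    rw [hpre, measure_diff hsub (meas4 2 3 4 5 false false false false).nullMeasurableSet
      (measure_ne_top P _),
      ENNReal.toReal_sub_of_le (measure_mono hsub) (measure_ne_top P _),
      rC2, rB4, W2, W4]
    norm_num
  have q4 : ((Measure.map bin2 P) {x : Conf1 | x 2 = false ∧ x 1 = true ∧ x 0 = false}).toReal
      = 27/2048 := by
    rw [Measure.map_apply meas_bin2 (meas3 2 1 0 false true false)]
    have hpre : bin2 ⁻¹' {x : Conf1 | x 2 = false ∧ x 1 = true ∧ x 0 = false}
        = ({ω : Conf1 | ω 0 = false ∧ ω 1 = false ∧ ω 2 = false ∧ ω 3 = true ∧ ω 4 = false ∧ ω 5 = false}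
          ∪ {ω : Conf1 | ω 0 = false ∧ ω 1 = false ∧ ω 2 = true ∧ ω 3 = false ∧ ω 4 = false ∧ ω 5 = false})
          ∪ {ω : Conf1 | ω 0 = false ∧ ω 1 = false ∧ ω 2 = true ∧ ω 3 = true ∧ ω 4 = false ∧ ω 5 = false} := by
      ext ω
      simp only [Set.mem_preimage, Set.mem_setOf_eq, Set.mem_union, bin2]
      norm_num
      cases h0 : ω 0 <;> cases h1 : ω 1 <;> cases h2 : ω 2 <;> cases h3 : ω 3 <;> simp_all
    have d12 : Disjoint
        {ω : Conf1 | ω 0 = false ∧ ω 1 = false ∧ ω 2 = false ∧ ω 3 = true ∧ ω 4 = false ∧ ω 5 = false}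
        {ω : Conf1 | ω 0 = false ∧ ω 1 = false ∧ ω 2 = true ∧ ω 3 = false ∧ ω 4 = false ∧ ω 5 = false} := by
      rw [Set.disjoint_left]; intro ω h1 h2; simp_all
    have d13 : Disjoint
        {ω : Conf1 | ω 0 = false ∧ ω 1 = false ∧ ω 2 = false ∧ ω 3 = true ∧ ω 4 = false ∧ ω 5 = false}
        {ω : Conf1 | ω 0 = false ∧ ω 1 = false ∧ ω 2 = true ∧ ω 3 = true ∧ ω 4 = false ∧ ω 5 = false} := by
      rw [Set.disjoint_left]; intro ω h1 h2; simp_all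
    have d23 : Disjoint
        {ω : Conf1 | ω 0 = false ∧ ω 1 = false ∧ ω 2 = true ∧ ω 3 = false ∧ ω 4 = false ∧ ω 5 = false}
        {ω : Conf1 | ω 0 = false ∧ ω 1 = false ∧ ω 2 = true ∧ ω 3 = true ∧ ω 4 = false ∧ ω 5 = false} := by
      rw [Set.disjoint_left]; intro ω h1 h2; simp_all
    rw [hpre, measure_union (Set.disjoint_union_left.mpr ⟨d13, d23⟩)
        (meas6 0 1 2 3 4 5 false false true true false false),
      measure_union d12 (meas6 0 1 2 3 4 5 false false true false false false),
      rS1, rS2, rS3, ENNReal.toReal_add (by finiteness) (by finiteness),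
      ENNReal.toReal_add (by finiteness) (by finiteness), W6a, W6b, W6c]
    norm_num
  constructor
  · have i1 : {x : Conf1 | x 2 = false} ∩ {x : Conf1 | x 1 = true ∧ x 0 = false}
        = {x : Conf1 | x 2 = false ∧ x 1 = true ∧ x 0 = false} := rfl
    have i2 : {x : Conf1 | x 2 = false} ∩ {x : Conf1 | x 1 = true}
        = {x : Conf1 | x 2 = false ∧ x 1 = true} := rfl
    unfold condProb1
    rw [i1, i2, q4, q2, q3, q1]
    norm_num
  · intro h
    have h2 := congrArg ENNReal.toReal h
    rw [ENNReal.toReal_mul, ENNReal.toReal_mul, q4, q1, q3, q2] at h2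
    norm_num at h2
end
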